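/- If card = one for every relationship/entity pair in a relational schema S, then for every valid relational path P, every skeleton σ ∈ Σ_S, and every base item b, the terminal set P|_b contains at most one element. -/
import Mathlib


/-- Kinds of item classes in a relational schema. -/
inductive ItemKind | entity | relationship
deriving DecidableEq

/-- Cardinalities. -/
inductive Card | one | many
deriving DecidableEq

/-- A relational schema: item classes with kinds, participation of entity
classes in relationship classes, and a cardinality function `card R E`. -/
structure Schema where
  Class : Type
  kind : Class → ItemKind
  participates : Class → Class → Prop   -- `participates E R`
  card : Class → Class → Card           -- `card R E`

namespace Schema

/-- Condition (1) of relational paths: alternation between entity and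
relationship classes, with participation at each consecutive pair. -/
def Alternates (S : Schema) (P : List S.Class) : Prop :=
  ∀ i a b, P[i]? = some a → P[i+1]? = some b →
    ((S.kind a = .entity ∧ S.kind b = .relationship ∧ S.participates a b) ∨
     (S.kind a = .relationship ∧ S.kind b = .entity ∧ S.participates b a))

/-- Condition (2): in every subsequence `[E, R, E']`, `E ≠ E'`. -/
def NoERE (S : Schema) (P : List S.Class) : Prop :=
  ∀ i a b c, P[i]? = some a → P[i+1]? = some b → P[i+2]? = some c →
    S.kind a = .entity → a ≠ c

/-- Condition (3): in every subsequence `[R, E, R']` with `R = R'`,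
`card (R, E) = many`. -/
def CardMany (S : Schema) (P : List S.Class) : Prop :=
  ∀ i a b c, P[i]? = some a → P[i+1]? = some b → P[i+2]? = some c →
    S.kind a = .relationship → a = c → S.card a b = .many

/-- A valid relational path. -/
def ValidPath (S : Schema) (P : List S.Class) : Prop :=
  P ≠ [] ∧ S.Alternates P ∧ S.NoERE P ∧ S.CardMany P

end Schema

/-- A relational skeleton instantiating a schema: items with classes and a
symmetric adjacency relation, respecting participation and cardinality
constraints (`card = one` forces at most one adjacent relationship instance;
relationship instances have exactly one adjacent entity instance per
participating entity class). -/
structure Skeleton (S : Schema) where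
  Item : Type
  classOf : Item → S.Class
  adj : Item → Item → Prop
  adj_symm : ∀ {i j}, adj i j → adj j i
  adj_alt : ∀ {i j}, adj i j →
    (S.kind (classOf i) = .entity ∧ S.kind (classOf j) = .relationship ∧
      S.participates (classOf i) (classOf j)) ∨
    (S.kind (classOf i) = .relationship ∧ S.kind (classOf j) = .entity ∧
      S.participates (classOf j) (classOf i))
  card_one : ∀ {e r r'}, S.kind (classOf e) = .entity →
    S.card (classOf r) (classOf e) = .one → classOf r = classOf r' →
    adj e r → adj e r' → r = r'
  rel_unique : ∀ {r i j}, S.kind (classOf r) = .relationship →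
    adj r i → adj r j → classOf i = classOf j → i = j
  rel_total : ∀ {r E}, S.kind (classOf r) = .relationship →
    S.participates E (classOf r) → ∃ e, classOf e = E ∧ adj r e

namespace Skeleton

variable {S : Schema} (σ : Skeleton S)

/-- Auxiliary recursion for terminal sets under bridge burning semantics:
`(tsetAux P b ℓ).1` is the terminal set `P^{1:ℓ+1}|_b` (0-indexed `ℓ`) and
`(tsetAux P b ℓ).2` is the set of all items visited up to step `ℓ`. -/
def tsetAux (P : List S.Class) (b : σ.Item) : ℕ → Set σ.Item × Set σ.Item
  | 0 => ({b}, {b})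
  | ℓ+1 =>
      let prev := tsetAux P b ℓ
      let cur : Set σ.Item :=
        {i | P[ℓ+1]? = some (σ.classOf i) ∧ (∃ j ∈ prev.1, σ.adj i j) ∧
             i ∉ prev.2}
      (cur, prev.2 ∪ cur)

/-- The terminal set `P^{1:ℓ+1}|_b` (so `ℓ` is 0-indexed: `tset P b 0 = {b}`). -/
def tset (P : List S.Class) (b : σ.Item) (ℓ : ℕ) : Set σ.Item :=
  (σ.tsetAux P b ℓ).1

/-- The (full) terminal set `P|_b`. -/
def tfull (P : List S.Class) (b : σ.Item) : Set σ.Item :=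
  σ.tset P b (P.length - 1)

end Skeleton

/-- if every cardinality in the schema is `one`, then every
terminal set `P|_b` of a valid relational path contains at most one
element. -/
theorem tfull_subsingleton_of_all_card_one (S : Schema)
    (hone : ∀ r e, S.card r e = Card.one)
    (P : List S.Class) (hP : S.ValidPath P)
    (σ : Skeleton S) (b : σ.Item) (hb : P[0]? = some (σ.classOf b)) :
    (σ.tfull P b).Subsingleton := by
  suffices h : ∀ ℓ, (σ.tset P b ℓ).Subsingleton from h _
  intro ℓ
  induction ℓ with
  | zero =>
    simp only [Skeleton.tset, Skeleton.tsetAux]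
    exact Set.subsingleton_singleton
  | succ ℓ ih =>
    intro i hi i' hi'
    simp only [Skeleton.tset, Skeleton.tsetAux, Set.mem_setOf_eq] at hi hi'
    obtain ⟨hc, ⟨j, hj, hadj⟩, -⟩ := hi
    obtain ⟨hc', ⟨j', hj', hadj'⟩, -⟩ := hi'
    have hjj : j = j' := ih hj hj'
    subst hjj
    have hcc : σ.classOf i = σ.classOf i' := by
      rw [hc] at hc'; exact Option.some.inj hc'
    rcases σ.adj_alt hadj with ⟨hie, hjr, -⟩ | ⟨hir, hje, -⟩
    · exact σ.rel_unique hjr (σ.adj_symm hadj) (σ.adj_symm hadj') hcc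
    · exact σ.card_one hje (hone _ _) hcc (σ.adj_symm hadj) (σ.adj_symm hadj')
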